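/- For every integer j ≥ 1, the spectrum of the position operator q̂ = M^q/2 consists of exactly 2j+1 distinct eigenvalues, namely q_{±(j−k)} = ±√((j−k)(j+k)) for k = 0, 1, …, j; equivalently, the eigenvalues of M^q are precisely the 2j+1 distinct real numbers ±2√((j−k)(j+k)), k = 0, …, j (the value 0 occurring once, for k = j). -/

import Mathlib

/-!
`M^q` only couples indices of opposite parity; write `B` for its block from odd to even indices, so
that `(M^q)² = BBᵀ ⊕ BᵀB`. If `BᵀB t = ε² t` with `ε ≠ 0` and `w` is `t` placed on the odd indices,
then `M^q w ± ε w` is an eigenvector for `±ε`, and a kernel vector supported on the even indices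
gives the eigenvalue `0`.

The Jacobi matrix `BᵀB` equals `4j² - X₀X₀ᵀ` for lower bidiagonal matrices `X_s` (`ladder`) with
the shape invariance `X_sᵀX_s = X_{s+1}X_{s+1}ᵀ + 8s + 4`. Starting from the kernel of `X_kᵀ` and
applying `X_{k-1}, …, X_0` gives an eigenvector of `X₀X₀ᵀ` for `4k²` (`k < j`), that is, of `BᵀB`
for `4(j² - k²)`. These `2j + 1` distinct values exhaust the at most `2j + 1` eigenvalues of `M^q`.
-/

/-- The off-diagonal coefficient `M_k`: `√(k(k+1))` if `k` is odd, and
`√((2j−k)(2j−k−1))` if `k` is even. -/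
noncomputable def Mcoef (j k : ℕ) : ℝ :=
  if k % 2 = 1 then Real.sqrt ((k : ℝ) * ((k : ℝ) + 1))
  else Real.sqrt ((2 * (j : ℝ) - (k : ℝ)) * (2 * (j : ℝ) - (k : ℝ) - 1))

/-- The symmetric tridiagonal matrix `M^q = 2q̂` with `(M^q)_{k,k+1} = (M^q)_{k+1,k} = M_k`. -/
noncomputable def Mq (j : ℕ) : Matrix (Fin (2 * j + 1)) (Fin (2 * j + 1)) ℝ :=
  fun k l =>
    if (l : ℕ) = (k : ℕ) + 1 then Mcoef j k
    else if (k : ℕ) = (l : ℕ) + 1 then Mcoef j l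
    else 0

/-- The eigenvalues `ε_k = -2√((j-k)(j+k))` for `k = 0,…,j-1`, `ε_j = 0`, and
`ε_{2j-k} = 2√((j-k)(j+k))` for `k = 0,…,j-1`. -/
noncomputable def eps (j l : ℕ) : ℝ :=
  if l < j then -(2 * Real.sqrt (((j : ℝ) - (l : ℝ)) * ((j : ℝ) + (l : ℝ))))
  else if l = j then 0
  else 2 * Real.sqrt (((j : ℝ) - ((2 * j - l : ℕ) : ℝ)) * ((j : ℝ) + ((2 * j - l : ℕ) : ℝ)))

open Matrix Finset

theorem Matrix.setOf_eigenvalue_subset_roots {n K : Type*} [Fintype n] [DecidableEq n] [Field K]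
    [DecidableEq K] (A : Matrix n n K) :
    {x : K | ∃ v : n → K, v ≠ 0 ∧ A *ᵥ v = x • v} ⊆ A.charpoly.roots.toFinset := by
  rintro x ⟨v, hv, hAv⟩
  rw [Finset.mem_coe, Multiset.mem_toFinset, Polynomial.mem_roots A.charpoly_monic.ne_zero,
    Polynomial.IsRoot, eval_charpoly, ← exists_mulVec_eq_zero_iff]
  exact ⟨v, hv, by simp [sub_mulVec, hAv]⟩

theorem Matrix.ncard_setOf_eigenvalue_le {n K : Type*} [Fintype n] [DecidableEq n] [Field K]
    (A : Matrix n n K) :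
    {x : K | ∃ v : n → K, v ≠ 0 ∧ A *ᵥ v = x • v}.ncard ≤ Fintype.card n := by
  classical
  calc _ ≤ (A.charpoly.roots.toFinset : Set K).ncard :=
        Set.ncard_le_ncard A.setOf_eigenvalue_subset_roots (Finset.finite_toSet _)
    _ ≤ Multiset.card A.charpoly.roots := by
        rw [Set.ncard_coe_finset]; exact Multiset.toFinset_card_le _
    _ ≤ A.charpoly.natDegree := Polynomial.card_roots' _
    _ = Fintype.card n := A.charpoly_natDegree_eq_dim

theorem Matrix.mulVec_mulVec_add_smul {n R : Type*} [Fintype n] [CommRing R]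
    {A : Matrix n n R} {w : n → R} {x : R} (h : A *ᵥ (A *ᵥ w) = x ^ 2 • w) :
    A *ᵥ (A *ᵥ w + x • w) = x • (A *ᵥ w + x • w) := by
  rw [mulVec_add, mulVec_smul, h, smul_add, pow_two, mul_smul, add_comm]

theorem ncard_setOf_eq_or_eq_neg {α : Type*} [AddCommGroup α] [LinearOrder α]
    [IsOrderedAddMonoid α] {f : ℕ → α} {j : ℕ} (hf : StrictAntiOn f (Set.Iic j)) (hfj : f j = 0) :
    {x : α | ∃ k, k ≤ j ∧ (x = f k ∨ x = -f k)}.ncard = 2 * j + 1 := by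
  classical
  set P := (range (j + 1)).image f
  set N := (range (j + 1)).image (fun k => -f k)
  have hIic : ((range (j + 1) : Finset ℕ) : Set ℕ) = Set.Iic j := by ext; simp
  have hnonneg : ∀ k ≤ j, 0 ≤ f k := fun k hk =>
    hfj ▸ hf.antitoneOn hk (Set.mem_Iic.2 le_rfl) hk
  have hP : P.card = j + 1 := by
    rw [card_image_of_injOn (hIic ▸ hf.injOn), card_range]
  have hN : N.card = j + 1 := by
    rw [card_image_of_injOn (hIic ▸ hf.neg.injOn), card_range]
  have hPN : P ∩ N = {0} := by
    ext x
    simp only [P, N, mem_inter, mem_image, mem_range, Nat.lt_succ_iff, mem_singleton]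
    constructor
    · rintro ⟨⟨k, hk, rfl⟩, ⟨l, hl, hlk⟩⟩
      exact le_antisymm (hlk ▸ neg_nonpos.2 (hnonneg l hl)) (hnonneg k hk)
    · rintro rfl
      exact ⟨⟨j, le_rfl, hfj⟩, ⟨j, le_rfl, by simp [hfj]⟩⟩
  have hset : {x : α | ∃ k, k ≤ j ∧ (x = f k ∨ x = -f k)} = ↑(P ∪ N) := by
    ext x
    simp only [P, N, Set.mem_ofPred_eq, coe_union, coe_image, Set.mem_union, Set.mem_image, hIic,
      Set.mem_Iic]
    constructor
    · rintro ⟨k, hk, rfl | rfl⟩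
      exacts [Or.inl ⟨k, hk, rfl⟩, Or.inr ⟨k, hk, rfl⟩]
    · rintro (⟨k, hk, rfl⟩ | ⟨k, hk, rfl⟩)
      exacts [⟨k, hk, Or.inl rfl⟩, ⟨k, hk, Or.inr rfl⟩]
  have := card_union_add_card_inter P N
  rw [hP, hN, hPN, card_singleton] at this
  rw [hset, Set.ncard_coe_finset]
  omega

theorem Mcoef_two_mul (j a : ℕ) :
    Mcoef j (2 * a) = √((2 * j - 2 * a) * (2 * j - 2 * a - 1)) := by
  simp [Mcoef]

theorem Mcoef_two_mul_add_one (j a : ℕ) :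
    Mcoef j (2 * a + 1) = √((2 * a + 1) * (2 * a + 2)) := by
  rw [Mcoef, if_pos (by omega)]
  push_cast
  ring_nf

theorem Mcoef_two_mul_self (j : ℕ) : Mcoef j (2 * j) = 0 := by
  simp [Mcoef_two_mul]

theorem Mcoef_two_mul_add_one_pos (j a : ℕ) : 0 < Mcoef j (2 * a + 1) := by
  rw [Mcoef_two_mul_add_one]
  positivity

/-- `M^q` extended to sequences; on indices `≤ 2j` it agrees with `Mq j` because
`Mcoef j (2 * j) = 0`. -/
noncomputable def MqOp (j : ℕ) (u : ℕ → ℝ) : ℕ → ℝ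
  | 0 => Mcoef j 0 * u 1
  | n + 1 => Mcoef j n * u n + Mcoef j (n + 1) * u (n + 2)

theorem Mq_mulVec (j : ℕ) (u : ℕ → ℝ) :
    Mq j *ᵥ (fun i => u i) = fun i : Fin (2 * j + 1) => MqOp j u i := by
  ext ⟨i, hi⟩
  simp only [mulVec, dotProduct, Mq]
  rw [Fin.sum_univ_eq_sum_range (fun l => (if l = i + 1 then Mcoef j i
    else if i = l + 1 then Mcoef j l else 0) * u l)]
  rcases i with _ | m
  · simp only [MqOp]
    rw [sum_eq_single 1]
    · simp
    · intro l _ hl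
      simp [hl]
    · intro h1
      obtain rfl : j = 0 := by rw [mem_range] at h1; omega
      simpa using Or.inl (Mcoef_two_mul_self 0)
  · simp only [MqOp]
    rw [sum_eq_add m (m + 2) (by omega)]
    · simp [show m ≠ m + 1 + 1 by omega]
    · intro l _ hl
      simp [hl.2, Ne.symm hl.1]
    · intro hm
      exact absurd (mem_range.2 (by omega)) hm
    · intro hm
      have hlast : m + 1 = 2 * j := by rw [mem_range] at hm; omega
      simp [hlast, Mcoef_two_mul_self]

noncomputable def zeroMode (j : ℕ) : ℕ → ℝ
  | 0 => 1
  | 1 => 0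
  | n + 2 => -(Mcoef j n * zeroMode j n) / Mcoef j (n + 1)

theorem zeroMode_two_mul_add_one (j a : ℕ) : zeroMode j (2 * a + 1) = 0 := by
  induction a with
  | zero => rfl
  | succ a ih => simp [show 2 * (a + 1) + 1 = 2 * a + 1 + 2 by ring, zeroMode, ih]

theorem MqOp_zeroMode (j : ℕ) : MqOp j (zeroMode j) = 0 := by
  funext n
  rw [Pi.zero_apply]
  rcases n with _ | n
  · simp [MqOp, zeroMode]
  · obtain ⟨a, rfl | rfl⟩ := Nat.even_or_odd' n
    · have := (Mcoef_two_mul_add_one_pos j a).ne'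
      simp only [MqOp, zeroMode]
      field_simp
      ring
    · simp [MqOp, zeroMode, zeroMode_two_mul_add_one]

section Ladder

variable (j : ℕ)

noncomputable def ladderA (m : ℕ) : ℝ := √((2 * m + 1) * (2 * j - 2 * m - 2))

noncomputable def ladderB (m : ℕ) : ℝ := √(2 * m * (2 * j - 2 * m - 1))

/-- The lower bidiagonal `X_s`; the junk value `u (0 - 1) = u 0` is harmless since
`ladderB j 0 = 0`. -/
noncomputable def ladder (s : ℕ) (u : ℕ → ℝ) (n : ℕ) : ℝ :=
  ladderA j (n + s) * u n - ladderB j n * u (n - 1)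

noncomputable def ladderT (s : ℕ) (u : ℕ → ℝ) (n : ℕ) : ℝ :=
  ladderA j (n + s) * u n - ladderB j (n + 1) * u (n + 1)

variable {j}

@[simp] theorem ladderB_zero : ladderB j 0 = 0 := by simp [ladderB]

theorem ladderA_eq_zero {m : ℕ} (h : j ≤ m + 1) : ladderA j m = 0 := by
  have : (j : ℝ) ≤ m + 1 := by exact_mod_cast h
  exact Real.sqrt_eq_zero_of_nonpos
    (mul_nonpos_of_nonneg_of_nonpos (by positivity) (by linarith))

theorem ladderA_pos {m : ℕ} (h : m + 2 ≤ j) : 0 < ladderA j m := by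
  have : (m : ℝ) + 2 ≤ j := by exact_mod_cast h
  exact Real.sqrt_pos.2 (mul_pos (by positivity) (by linarith))

theorem ladderB_pos {m : ℕ} (h0 : 0 < m) (h : m < j) : 0 < ladderB j m := by
  have : (1 : ℝ) ≤ m := by exact_mod_cast h0
  have : (m : ℝ) + 1 ≤ j := by exact_mod_cast h
  exact Real.sqrt_pos.2 (mul_pos (by positivity) (by linarith))

theorem ladderA_sq {m : ℕ} (h : m + 1 ≤ j) :
    ladderA j m ^ 2 = (2 * m + 1) * (2 * j - 2 * m - 2) := by
  have : (m : ℝ) + 1 ≤ j := by exact_mod_cast h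
  exact Real.sq_sqrt (mul_nonneg (by positivity) (by linarith))

theorem ladderB_sq {m : ℕ} (h : m + 1 ≤ j) :
    ladderB j m ^ 2 = 2 * m * (2 * j - 2 * m - 1) := by
  have : (m : ℝ) + 1 ≤ j := by exact_mod_cast h
  exact Real.sq_sqrt (mul_nonneg (by positivity) (by linarith))

theorem ladderT_ladder {s : ℕ} {u : ℕ → ℝ} (hu : ∀ n, j ≤ n + s + 1 → u n = 0) :
    ladderT j s (ladder j s u)
      = ladder j (s + 1) (ladderT j (s + 1) u) + (8 * s + 4 : ℝ) • u := by
  funext n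
  have hdiag : (ladderA j (n + s) ^ 2 + ladderB j (n + 1) ^ 2 - ladderA j (n + s + 1) ^ 2
      - ladderB j n ^ 2 - (8 * s + 4)) * u n = 0 := by
    by_cases h : n + s + 2 ≤ j
    · rw [ladderA_sq (by omega), ladderA_sq (by omega), ladderB_sq (by omega),
        ladderB_sq (by omega)]
      push_cast
      ring
    · rw [hu n (by omega), mul_zero]
  have hshift : ∀ m, ladderA j (m + 1 + s) = ladderA j (m + s + 1) := fun m => by
    rw [Nat.add_right_comm]
  rcases n with _ | n
  · simp only [ladder, ladderT, ladderB_zero, Pi.add_apply, Pi.smul_apply, smul_eq_mul, hshift]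
      at hdiag ⊢
    linear_combination hdiag
  · simp only [ladder, ladderT, Pi.add_apply, Pi.smul_apply, smul_eq_mul, Nat.add_sub_cancel,
      hshift] at hdiag ⊢
    linear_combination hdiag

variable (j) in
noncomputable def ladderGroundState (s : ℕ) : ℕ → ℝ
  | 0 => 1
  | n + 1 => ladderA j (n + s) * ladderGroundState s n / ladderB j (n + 1)

theorem ladderT_ladderGroundState (s : ℕ) : ladderT j s (ladderGroundState j s) = 0 := by
  funext n
  rw [Pi.zero_apply, ladderT, ladderGroundState]
  by_cases h : n + 1 < j
  · have := (ladderB_pos n.succ_pos h).ne'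
    field_simp
    ring
  · simp [ladderA_eq_zero (show j ≤ n + s + 1 by omega)]

theorem ladderGroundState_eq_zero {s n : ℕ} (hs : s < j) (hn : j ≤ n + s) :
    ladderGroundState j s n = 0 := by
  induction n with
  | zero => omega
  | succ n ih =>
    rw [ladderGroundState]
    by_cases h : j ≤ n + s
    · simp [ih h]
    · simp [ladderA_eq_zero (show j ≤ n + s + 1 by omega)]

theorem exists_ladder_ladderT_eq_smul {k s : ℕ} (hsk : s ≤ k) (hk : k < j) :
    ∃ u : ℕ → ℝ, u 0 ≠ 0 ∧ (∀ n, j ≤ n + s → u n = 0) ∧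
      ladder j s (ladderT j s u) = (4 * (k : ℝ) ^ 2 - 4 * s ^ 2) • u := by
  induction hsk using Nat.decreasingInduction with
  | self =>
    refine ⟨ladderGroundState j k, one_ne_zero, fun n => ladderGroundState_eq_zero hk, ?_⟩
    funext n
    simp [ladderT_ladderGroundState, ladder]
  | of_succ s hs ih =>
    obtain ⟨u, hu0, hu, hHu⟩ := ih
    refine ⟨ladder j s u, ?_, ?_, ?_⟩
    · simpa [ladder] using ⟨(ladderA_pos (by omega)).ne', hu0⟩
    · intro n hn
      simp [ladder, hu n (by omega), hu (n - 1) (by omega)]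
    · rw [ladderT_ladder (fun n hn => hu n (by omega)), hHu]
      funext n
      simp only [ladder, Pi.add_apply, Pi.smul_apply, smul_eq_mul]
      push_cast
      ring

end Ladder

theorem Mcoef_sq_add_sq {j a : ℕ} (h : a + 1 ≤ j) :
    Mcoef j (2 * a) ^ 2 + Mcoef j (2 * a + 1) ^ 2
      = 4 * (j : ℝ) ^ 2 - ladderA j a ^ 2 - ladderB j a ^ 2 := by
  have : (a : ℝ) + 1 ≤ j := by exact_mod_cast h
  rw [Mcoef_two_mul, Mcoef_two_mul_add_one, ladderA_sq h, ladderB_sq h,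
    Real.sq_sqrt (by nlinarith), Real.sq_sqrt (by positivity)]
  ring

theorem Mcoef_mul_Mcoef_eq_ladderA_mul_ladderB {j a : ℕ} (h : a + 1 ≤ j) :
    Mcoef j (2 * a + 1) * Mcoef j (2 * a + 2) = ladderA j a * ladderB j (a + 1) := by
  have : (a : ℝ) + 1 ≤ j := by exact_mod_cast h
  have h2 : Mcoef j (2 * a + 2) = √((2 * j - 2 * a - 2) * (2 * j - 2 * a - 3)) := by
    rw [show 2 * a + 2 = 2 * (a + 1) by ring, Mcoef_two_mul]
    push_cast
    ring_nf
  rw [Mcoef_two_mul_add_one, h2, ladderA, ladderB, ← Real.sqrt_mul (by positivity),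
    ← Real.sqrt_mul (mul_nonneg (by positivity) (by linarith))]
  push_cast
  ring_nf

noncomputable def oddLift (t : ℕ → ℝ) (n : ℕ) : ℝ := if n % 2 = 1 then t (n / 2) else 0

@[simp] theorem oddLift_two_mul (t : ℕ → ℝ) (a : ℕ) : oddLift t (2 * a) = 0 := by
  simp [oddLift]

@[simp] theorem oddLift_two_mul_add_one (t : ℕ → ℝ) (a : ℕ) :
    oddLift t (2 * a + 1) = t a := by
  simp [oddLift, Nat.add_mod, Nat.add_div]

theorem MqOp_oddLift_two_mul_add_one (j : ℕ) (t : ℕ → ℝ) (a : ℕ) :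
    MqOp j (oddLift t) (2 * a + 1) = 0 := by
  rw [MqOp, show 2 * a + 2 = 2 * (a + 1) by ring, oddLift_two_mul, oddLift_two_mul]
  ring

theorem MqOp_oddLift_zero (j : ℕ) (t : ℕ → ℝ) : MqOp j (oddLift t) 0 = Mcoef j 0 * t 0 :=
  congrArg (Mcoef j 0 * ·) (oddLift_two_mul_add_one t 0)

theorem MqOp_oddLift_two_mul_add_two (j : ℕ) (t : ℕ → ℝ) (a : ℕ) :
    MqOp j (oddLift t) (2 * a + 2)
      = Mcoef j (2 * a + 1) * t a + Mcoef j (2 * a + 2) * t (a + 1) := by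
  rw [MqOp, show 2 * a + 1 + 2 = 2 * (a + 1) + 1 by ring, oddLift_two_mul_add_one,
    oddLift_two_mul_add_one]

theorem MqOp_MqOp_oddLift {j a : ℕ} (t : ℕ → ℝ) (ha : a + 1 ≤ j) :
    MqOp j (MqOp j (oddLift t)) (2 * a + 1)
      = 4 * (j : ℝ) ^ 2 * t a - ladder j 0 (ladderT j 0 t) a := by
  have hsq := Mcoef_sq_add_sq ha
  have hprod := Mcoef_mul_Mcoef_eq_ladderA_mul_ladderB ha
  rw [MqOp, MqOp_oddLift_two_mul_add_two]
  rcases a with _ | b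
  · simp only [Nat.mul_zero, Nat.add_zero, MqOp_oddLift_zero, ladder, ladderT, ladderB_zero]
      at hsq hprod ⊢
    linear_combination t 0 * hsq + t 1 * hprod
  · have hprod' := Mcoef_mul_Mcoef_eq_ladderA_mul_ladderB (show b + 1 ≤ j by omega)
    rw [show 2 * (b + 1) = 2 * b + 2 by ring, MqOp_oddLift_two_mul_add_two] at *
    simp only [ladder, ladderT, Nat.add_zero, Nat.add_sub_cancel] at *
    linear_combination t (b + 1) * hsq + t (b + 2) * hprod + t b * hprod'

theorem MqOp_two_mul_eq_zero {j : ℕ} {u : ℕ → ℝ} (hu : ∀ a, u (2 * a + 1) = 0) (a : ℕ) :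
    MqOp j u (2 * a) = 0 := by
  rcases a with _ | a
  · show Mcoef j 0 * u (2 * 0 + 1) = 0
    rw [hu, mul_zero]
  · rw [show 2 * (a + 1) = 2 * a + 1 + 1 by ring, MqOp, hu,
      show 2 * a + 1 + 2 = 2 * (a + 1) + 1 by ring, hu]
    ring

theorem exists_MqOp_MqOp_oddLift_eq {j k : ℕ} (hk : k < j) :
    ∃ t : ℕ → ℝ, t 0 ≠ 0 ∧ ∀ n ≤ 2 * j,
      MqOp j (MqOp j (oddLift t)) n = 4 * ((j : ℝ) ^ 2 - k ^ 2) * oddLift t n := by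
  obtain ⟨t, ht0, -, hHt⟩ := exists_ladder_ladderT_eq_smul (Nat.zero_le k) hk
  refine ⟨t, ht0, fun n hn => ?_⟩
  obtain ⟨a, rfl | rfl⟩ := Nat.even_or_odd' n
  · rw [MqOp_two_mul_eq_zero (MqOp_oddLift_two_mul_add_one j t), oddLift_two_mul, mul_zero]
  · rw [MqOp_MqOp_oddLift t (by omega), hHt, oddLift_two_mul_add_one]
    simp only [Pi.smul_apply, smul_eq_mul]
    push_cast
    ring

theorem exists_Mq_mulVec_eq_smul_of_sq_eq {j k : ℕ} {x : ℝ} (hk : k ≤ j)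
    (hx : x ^ 2 = 4 * ((j : ℝ) ^ 2 - k ^ 2)) :
    ∃ v : Fin (2 * j + 1) → ℝ, v ≠ 0 ∧ Mq j *ᵥ v = x • v := by
  rcases hk.lt_or_eq with hk | hk
  · obtain ⟨t, ht0, ht⟩ := exists_MqOp_MqOp_oddLift_eq hk
    set w : Fin (2 * j + 1) → ℝ := fun i => oddLift t i
    have hw : Mq j *ᵥ (Mq j *ᵥ w) = x ^ 2 • w := by
      rw [Mq_mulVec, Mq_mulVec, hx]
      ext i
      exact ht i (by omega)
    have hx0 : x ≠ 0 := by
      rintro rfl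
      have : (k : ℝ) < j := by exact_mod_cast hk
      nlinarith
    refine ⟨Mq j *ᵥ w + x • w, fun h => ?_, mulVec_mulVec_add_smul hw⟩
    have h1 : MqOp j (oddLift t) (2 * 0 + 1) + x * oddLift t (2 * 0 + 1) = 0 := by
      simpa [w, Mq_mulVec] using congrFun h ⟨1, by omega⟩
    rw [MqOp_oddLift_two_mul_add_one, oddLift_two_mul_add_one, zero_add] at h1
    exact mul_ne_zero hx0 ht0 h1
  · obtain rfl : x = 0 := by simpa [hk] using hx
    refine ⟨fun i => zeroMode j i, fun h => ?_, ?_⟩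
    · simpa [zeroMode] using congrFun h ⟨0, by omega⟩
    · rw [Mq_mulVec, MqOp_zeroMode, zero_smul]
      rfl

theorem strictAntiOn_two_mul_sqrt (j : ℕ) :
    StrictAntiOn (fun k : ℕ => 2 * √(((j : ℝ) - k) * (j + k))) (Set.Iic j) := by
  intro k hk l hl hkl
  have hkl : (k : ℝ) < l := by exact_mod_cast hkl
  have hl : (l : ℝ) ≤ j := by exact_mod_cast hl
  have := Real.sqrt_lt_sqrt (by nlinarith) (show ((j : ℝ) - l) * (j + l) < (j - k) * (j + k) by
    nlinarith)
  dsimp only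
  linarith

theorem stmt12_general (j : ℕ) :
    {x : ℝ | ∃ v : Fin (2 * j + 1) → ℝ, v ≠ 0 ∧ (Mq j).mulVec v = x • v}
      = {x : ℝ | ∃ k : ℕ, k ≤ j ∧
          (x = 2 * Real.sqrt (((j : ℝ) - (k : ℝ)) * ((j : ℝ) + (k : ℝ))) ∨
           x = -(2 * Real.sqrt (((j : ℝ) - (k : ℝ)) * ((j : ℝ) + (k : ℝ)))))} ∧
    {x : ℝ | ∃ k : ℕ, k ≤ j ∧
          (x = 2 * Real.sqrt (((j : ℝ) - (k : ℝ)) * ((j : ℝ) + (k : ℝ))) ∨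
           x = -(2 * Real.sqrt (((j : ℝ) - (k : ℝ)) * ((j : ℝ) + (k : ℝ)))))}.ncard
      = 2 * j + 1 := by
  have hcard := ncard_setOf_eq_or_eq_neg (strictAntiOn_two_mul_sqrt j) (by simp)
  refine ⟨Eq.symm (Set.eq_of_subset_of_ncard_le ?_ ?_ ?_), hcard⟩
  · rintro x ⟨k, hk, hx⟩
    refine exists_Mq_mulVec_eq_smul_of_sq_eq hk ?_
    have hkj : (k : ℝ) ≤ j := by exact_mod_cast hk
    have hsq : √(((j : ℝ) - k) * (j + k)) ^ 2 = ((j : ℝ) - k) * (j + k) :=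
      Real.sq_sqrt (by nlinarith)
    rcases hx with rfl | rfl <;> linear_combination 4 * hsq
  · simpa [hcard] using (Mq j).ncard_setOf_eigenvalue_le
  · exact (Finset.finite_toSet _).subset (Mq j).setOf_eigenvalue_subset_roots

theorem stmt12 (j : ℕ) (hj : 1 ≤ j) :
    {x : ℝ | ∃ v : Fin (2 * j + 1) → ℝ, v ≠ 0 ∧ (Mq j).mulVec v = x • v}
      = {x : ℝ | ∃ k : ℕ, k ≤ j ∧
          (x = 2 * Real.sqrt (((j : ℝ) - (k : ℝ)) * ((j : ℝ) + (k : ℝ))) ∨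
           x = -(2 * Real.sqrt (((j : ℝ) - (k : ℝ)) * ((j : ℝ) + (k : ℝ)))))} ∧
    {x : ℝ | ∃ k : ℕ, k ≤ j ∧
          (x = 2 * Real.sqrt (((j : ℝ) - (k : ℝ)) * ((j : ℝ) + (k : ℝ))) ∨
           x = -(2 * Real.sqrt (((j : ℝ) - (k : ℝ)) * ((j : ℝ) + (k : ℝ)))))}.ncard
      = 2 * j + 1 :=
  stmt12_general j
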